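/- arXiv:1011.4112 — 8 statements merged into one kernel-verified Lean document; each statement's English description precedes it below -/
import Mathlib

section
/- Let 𝔤 be a real Lie algebra and M a Lie module over 𝔤. For every n ≥ 1 the map τⁿ : CLⁿ(𝔤, Mᵃ) → CLⁿ⁻¹(𝔤, Hom(𝔤,M)ˢ) defined by τⁿ(ω)(x₁,…,x_{n−1})(xₙ) = ω(x₁,…,xₙ) is a linear bijection and is a morphism of cochain complexes, i.e. τⁿ⁺¹(dLⁿ ω) = dLⁿ⁻¹(τⁿ(ω)) for every n-multilinear map ω : 𝔤ⁿ → M, where the differential on the left is the Leibniz differential with antisymmetric coefficients Mᵃ and the differential on the right is the Leibniz differential with symmetric coefficients Hom(𝔤,M)ˢ. -/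
open scoped BigOperators

variable {G M : Type*}

/-- The Leibniz differential `dLⁿ` on `n`-cochains of a Lie algebra `G` with coefficients in
the Lie module `M` equipped with its *antisymmetric* Leibniz representation structure
(`[x,m]_L = ⁅x,m⁆`, `[m,x]_R = 0`). -/
noncomputable def leibnizDiffAntisym [LieRing G] [LieAlgebra ℝ G]
    [AddCommGroup M] [Module ℝ M] [LieRingModule G M] [LieModule ℝ G M]
    (n : ℕ) (ω : (Fin n → G) → M) : (Fin (n + 1) → G) → M :=
  fun x =>
    (∑ i : Fin n,
      ((-1 : ℝ) ^ (i : ℕ)) • ⁅x i.castSucc, ω (Fin.removeNth i.castSucc x)⁆)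
    + ∑ i : Fin (n + 1), ∑ j : Fin (n + 1),
        if (i : ℕ) < (j : ℕ) then
          ((-1 : ℝ) ^ ((i : ℕ) + 1)) • ω (Fin.removeNth i (Function.update x j ⁅x i, x j⁆))
        else 0

/-- The Leibniz differential `dLⁿ` on `n`-cochains of a Lie algebra `G` with coefficients in
`Hom(G, M)` equipped with its *symmetric* Leibniz representation structure, where the Lie
module structure on `Hom(G, M)` is `(x·α) y = ⁅x, α y⁆ - α ⁅x, y⁆` and
`[x,α]_L = x·α = -[α,x]_R`. -/
noncomputable def leibnizDiffSymHom [LieRing G] [LieAlgebra ℝ G]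
    [AddCommGroup M] [Module ℝ M] [LieRingModule G M] [LieModule ℝ G M]
    (n : ℕ) (β : (Fin n → G) → G → M) : (Fin (n + 1) → G) → G → M :=
  fun x =>
    (∑ i : Fin n,
      ((-1 : ℝ) ^ (i : ℕ)) •
        fun y => ⁅x i.castSucc, β (Fin.removeNth i.castSucc x) y⁆
          - β (Fin.removeNth i.castSucc x) ⁅x i.castSucc, y⁆)
    + ((-1 : ℝ) ^ n) •
        (fun y => ⁅x (Fin.last n), β (x ∘ Fin.castSucc) y⁆
          - β (x ∘ Fin.castSucc) ⁅x (Fin.last n), y⁆)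
    + ∑ i : Fin (n + 1), ∑ j : Fin (n + 1),
        if (i : ℕ) < (j : ℕ) then
          ((-1 : ℝ) ^ ((i : ℕ) + 1)) • β (Fin.removeNth i (Function.update x j ⁅x i, x j⁆))
        else 0


lemma removeNth_castSucc_snoc {α : Type*} {n : ℕ} (x : Fin (n + 1) → α) (y : α)
    (i : Fin (n + 1)) :
    Fin.removeNth (α := fun _ => α) i.castSucc (Fin.snoc x y)
      = Fin.snoc (Fin.removeNth i x) y := by
  funext k
  simp only [Fin.removeNth]
  refine Fin.lastCases ?_ (fun k => ?_) k
  · rw [Fin.succAbove_castSucc_of_le _ _ (Fin.le_last i)]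
    simp [Fin.succ_last]
  · rw [Fin.castSucc_succAbove_castSucc]
    simp [Fin.removeNth]

lemma comp_castSucc_eq_init {α : Type*} {n : ℕ} (x : Fin (n + 1) → α) :
    x ∘ Fin.castSucc = Fin.init x := rfl

lemma double_sum_split {A : Type*} [AddCommMonoid A] {n : ℕ}
    (f : Fin (n + 2) → Fin (n + 2) → A)
    (h : ∀ j, f (Fin.last (n + 1)) j = 0) :
    ∑ i : Fin (n + 2), ∑ j : Fin (n + 2), f i j
      = (∑ i : Fin (n + 1), ∑ j : Fin (n + 1), f i.castSucc j.castSucc)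
        + ∑ i : Fin (n + 1), f i.castSucc (Fin.last (n + 1)) := by
  rw [Fin.sum_univ_castSucc (f := fun i => ∑ j, f i j)]
  simp only [h, Finset.sum_const_zero, add_zero]
  rw [← Finset.sum_add_distrib]
  exact Finset.sum_congr rfl fun i _ =>
    Fin.sum_univ_castSucc (f := fun j => f i.castSucc j)

/-- For a real Lie algebra `G`, a Lie module `M` over `G` and `n ≥ 1`
(written `n + 1` below), the map `τⁿ⁺¹ : CLⁿ⁺¹(G, Mᵃ) → CLⁿ(G, Hom(G,M)ˢ)`,
`τ(ω)(x₁,…,xₙ)(x_{n+1}) = ω(x₁,…,x_{n+1})`, is a linear bijection and a morphism of cochain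
complexes: `τ(dL ω) = dL(τ ω)`, the left differential taken with antisymmetric coefficients
`Mᵃ` and the right one with symmetric coefficients `Hom(G,M)ˢ`. -/
theorem leibniz_cochain_curry_equiv_and_chain_map
    [LieRing G] [LieAlgebra ℝ G] [AddCommGroup M] [Module ℝ M]
    [LieRingModule G M] [LieModule ℝ G M] (n : ℕ) :
    (∃ τ : MultilinearMap ℝ (fun _ : Fin (n + 1) => G) M ≃ₗ[ℝ]
        MultilinearMap ℝ (fun _ : Fin n => G) (G →ₗ[ℝ] M),
      ∀ (ω : MultilinearMap ℝ (fun _ : Fin (n + 1) => G) M) (x : Fin n → G) (y : G),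
        τ ω x y = ω (Fin.snoc x y)) ∧
    (∀ ω : MultilinearMap ℝ (fun _ : Fin (n + 1) => G) M,
      (fun (x : Fin (n + 1) → G) (y : G) =>
          leibnizDiffAntisym (n + 1) (fun z => ω z) (Fin.snoc x y))
        = leibnizDiffSymHom n (fun (x : Fin n → G) (y : G) => ω (Fin.snoc x y))) := by
  refine ⟨⟨multilinearCurryRightEquiv ℝ (fun _ : Fin (n + 1) => G) M,
    fun ω x y => rfl⟩, ?_⟩
  intro ω
  funext x y
  simp only [leibnizDiffAntisym, leibnizDiffSymHom]
  -- evaluate the right-hand side at `y`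
  simp only [Pi.add_apply, Finset.sum_apply, Pi.smul_apply, Pi.zero_apply,
    apply_ite (fun f : G → M => f y), smul_sub]
  rw [Finset.sum_sub_distrib]
  -- rewrite the first sum on the left-hand side
  have hL1 : (∑ i : Fin (n + 1), ((-1 : ℝ)) ^ (i : ℕ) •
        ⁅(Fin.snoc x y : Fin (n+2) → G) i.castSucc,
          ω (Fin.removeNth (α := fun _ => G) i.castSucc (Fin.snoc x y))⁆)
      = ∑ i : Fin (n + 1), ((-1 : ℝ)) ^ (i : ℕ) •
          ⁅x i, ω (Fin.snoc (Fin.removeNth i x) y)⁆ := by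
    refine Finset.sum_congr rfl fun i _ => ?_
    rw [removeNth_castSucc_snoc, Fin.snoc_castSucc]
  -- rewrite the double sum on the left-hand side
  have hL2 : (∑ i : Fin (n + 2), ∑ j : Fin (n + 2),
        if (i : ℕ) < (j : ℕ) then
          ((-1 : ℝ)) ^ ((i : ℕ) + 1) •
            ω (Fin.removeNth i
              (Function.update (Fin.snoc x y : Fin (n+2) → G) j
                ⁅(Fin.snoc x y : Fin (n+2) → G) i, (Fin.snoc x y : Fin (n+2) → G) j⁆))
        else 0)
      = (∑ i : Fin (n + 1), ∑ j : Fin (n + 1),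
          if (i : ℕ) < (j : ℕ) then
            ((-1 : ℝ)) ^ ((i : ℕ) + 1) •
              ω (Fin.snoc (Fin.removeNth i (Function.update x j ⁅x i, x j⁆)) y)
          else 0)
        + ∑ i : Fin (n + 1),
            ((-1 : ℝ)) ^ ((i : ℕ) + 1) • ω (Fin.snoc (Fin.removeNth i x) ⁅x i, y⁆) := by
    rw [double_sum_split (fun i j =>
      if (i : ℕ) < (j : ℕ) then
        ((-1 : ℝ)) ^ ((i : ℕ) + 1) •
          ω (Fin.removeNth i
            (Function.update (Fin.snoc x y : Fin (n+2) → G) j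
              ⁅(Fin.snoc x y : Fin (n+2) → G) i, (Fin.snoc x y : Fin (n+2) → G) j⁆))
      else 0) (fun j => if_neg (by
      rw [Fin.val_last]; exact Nat.not_lt.2 (Fin.is_le j)))]
    congr 1
    · refine Finset.sum_congr rfl fun i _ => Finset.sum_congr rfl fun j _ => ?_
      simp only [Fin.coe_castSucc]
      by_cases hij : (i : ℕ) < (j : ℕ)
      · rw [if_pos hij, if_pos hij, Fin.snoc_castSucc, Fin.snoc_castSucc,
          ← Fin.snoc_update, removeNth_castSucc_snoc]
      · rw [if_neg hij, if_neg hij]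
    · refine Finset.sum_congr rfl fun i _ => ?_
      rw [if_pos (by rw [Fin.coe_castSucc, Fin.val_last]; exact i.isLt),
        Fin.coe_castSucc, Fin.snoc_castSucc, Fin.snoc_last, Fin.update_snoc_last,
        removeNth_castSucc_snoc]
  rw [hL1, hL2]
  rw [Fin.sum_univ_castSucc (f := fun i : Fin (n + 1) =>
    ((-1 : ℝ)) ^ (i : ℕ) • ⁅x i, ω (Fin.snoc (Fin.removeNth i x) y)⁆)]
  rw [Fin.sum_univ_castSucc (f := fun i : Fin (n + 1) =>
    ((-1 : ℝ)) ^ ((i : ℕ) + 1) • ω (Fin.snoc (Fin.removeNth i x) ⁅x i, y⁆))]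
  simp only [Fin.coe_castSucc, Fin.val_last, Fin.removeNth_last, comp_castSucc_eq_init,
    pow_succ, mul_smul, neg_one_smul, smul_neg, Finset.sum_neg_distrib]
  abel
end

section
/- Let E be a finite-dimensional real vector space and X a smooth manifold modeled on E, equipped with a smooth map ▷ : X × X → X such that (X,▷) is a rack (each map y ↦ x ▷ y is a diffeomorphism of X and x ▷ (y ▷ z) = (x ▷ y) ▷ (x ▷ z) for all x,y,z), pointed at an element 1 ∈ X (1 ▷ x = x and x ▷ 1 = 1 for all x). For x ∈ X let Ad(x) : E → E be the differential at the point 1 of the smooth map y ↦ x ▷ y (well defined as an endomorphism of E since x ▷ 1 = 1, identifying the tangent space T₁X with E), and assume the map Ad : X → End(E) is differentiable at 1; let ad : E → End(E) be its differential at 1. Then the bilinear bracket on E defined by [u,v] := ad(u)(v) satisfies the left Leibniz identity [u,[v,w]] = [[u,v],w] + [v,[u,w]] for all u,v,w ∈ E. -/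
open scoped Manifold

/-- Let `E` be a finite-dimensional real vector space and `X` a smooth
manifold modeled on `E`, with a smooth pointed rack structure `(▷, 1)` in which every left
translation `x ▷ –` is a diffeomorphism. Let `Ad x : E → E` be the differential at `1` of
`y ↦ x ▷ y` (identifying `T₁X` with `E`; this is well defined since `x ▷ 1 = 1`), assume
`Ad : X → End E` is differentiable at `1`, and let `ad : E → End E` be its differential
at `1`. Then the bracket `[u,v] := ad u v` satisfies the left Leibniz identity. -/
theorem lie_rack_tangent_bracket_is_leibniz
    {E : Type*} [NormedAddCommGroup E] [NormedSpace ℝ E] [FiniteDimensional ℝ E]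
    {X : Type*} [TopologicalSpace X] [ChartedSpace E X]
    [IsManifold 𝓘(ℝ, E) (⊤ : ℕ∞) X]
    (op : X → X → X) (one : X)
    (hsmooth : ContMDiff (𝓘(ℝ, E).prod 𝓘(ℝ, E)) 𝓘(ℝ, E) (⊤ : ℕ∞) (fun p : X × X => op p.1 p.2))
    (hdiffeo : ∀ x : X, ∃ φ : Diffeomorph 𝓘(ℝ, E) 𝓘(ℝ, E) X X (⊤ : ℕ∞), ∀ y : X, φ y = op x y)
    (hdistrib : ∀ x y z : X, op x (op y z) = op (op x y) (op x z))
    (hone_l : ∀ x : X, op one x = x) (hone_r : ∀ x : X, op x one = one)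
    (Ad : X → E →L[ℝ] E)
    (hAd : ∀ x : X, Ad x = mfderiv 𝓘(ℝ, E) 𝓘(ℝ, E) (op x) one)
    (hAdDiff : MDifferentiableAt 𝓘(ℝ, E) 𝓘(ℝ, E →L[ℝ] E) Ad one)
    (ad : E →L[ℝ] E →L[ℝ] E)
    (had : ad = mfderiv 𝓘(ℝ, E) 𝓘(ℝ, E →L[ℝ] E) Ad one) :
    ∀ u v w : E, ad u (ad v w) = ad (ad u v) w + ad v (ad u w) := by
  -- each left translation is smooth
  have hOp : ∀ x : X, ContMDiff 𝓘(ℝ, E) 𝓘(ℝ, E) (⊤ : ℕ∞) (op x) := by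
    intro x
    obtain ⟨φ, hφ⟩ := hdiffeo x
    have : op x = φ := funext fun y => (hφ y).symm
    rw [this]; exact φ.contMDiff
  have hAd_mfd : ∀ x : X, HasMFDerivAt 𝓘(ℝ, E) 𝓘(ℝ, E) (op x) one (Ad x) := by
    intro x
    rw [hAd x]
    exact ((hOp x).mdifferentiableAt (by simp)).hasMFDerivAt
  have hAd_mfd' : ∀ x y : X, HasMFDerivAt 𝓘(ℝ, E) 𝓘(ℝ, E) (op x) (op y one) (Ad x) := by
    intro x y; rw [hone_r y]; exact hAd_mfd x
  have hAd' : HasMFDerivAt 𝓘(ℝ, E) 𝓘(ℝ, E →L[ℝ] E) Ad one ad := by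
    rw [had]; exact hAdDiff.hasMFDerivAt
  have hAd'' : ∀ x : X, HasMFDerivAt 𝓘(ℝ, E) 𝓘(ℝ, E →L[ℝ] E) Ad (op x one) ad := by
    intro x; rw [hone_r x]; exact hAd'
  have hAd_one : Ad one = ContinuousLinearMap.id ℝ E := by
    have hid : op one = id := funext hone_l
    rw [hAd one, hid, mfderiv_id]; rfl
  -- Step 1: Ad x ∘ Ad y = Ad (x ▷ y) ∘ Ad x
  have step1 : ∀ x y : X, (Ad x).comp (Ad y) = (Ad (op x y)).comp (Ad x) := by
    intro x y
    have h1 := HasMFDerivAt.comp (I' := 𝓘(ℝ, E)) one (hAd_mfd' x y) (hAd_mfd y)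
    have h2 := HasMFDerivAt.comp (I' := 𝓘(ℝ, E)) one (hAd_mfd' (op x y) x) (hAd_mfd x)
    simp only [Function.comp_def] at h1 h2
    have hfun : (fun z => op x (op y z)) = fun z => op (op x y) (op x z) :=
      funext fun z => hdistrib x y z
    rw [hfun] at h1
    exact h1.mfderiv.symm.trans h2.mfderiv
  set compL := ContinuousLinearMap.compL ℝ E E E with hcompL
  -- Step 2: Ad x ∘ ad v = ad (Ad x v) ∘ Ad x
  have step2 : ∀ (x : X) (v : E), (Ad x).comp (ad v) = (ad (Ad x v)).comp (Ad x) := by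
    intro x v
    have h1 := HasMFDerivAt.comp (I' := 𝓘(ℝ, E →L[ℝ] E)) one
      ((compL (Ad x)).hasMFDerivAt (x := Ad one)) hAd'
    have h2 := HasMFDerivAt.comp (I' := 𝓘(ℝ, E →L[ℝ] E)) one
      ((compL.flip (Ad x)).hasMFDerivAt (x := Ad (op x one)))
      (HasMFDerivAt.comp (I' := 𝓘(ℝ, E)) one (hAd'' x) (hAd_mfd x))
    simp only [Function.comp_def] at h1 h2
    have hfun : (fun y => compL (Ad x) (Ad y)) = fun y => compL.flip (Ad x) (Ad (op x y)) := by
      funext y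
      simp only [hcompL, ContinuousLinearMap.compL_apply, ContinuousLinearMap.flip_apply]
      exact step1 x y
    rw [hfun] at h1
    have := h1.mfderiv.symm.trans h2.mfderiv
    have := DFunLike.congr_fun this v
    have h' : @Eq (E →L[ℝ] E) (((ContinuousLinearMap.compL ℝ E E E) (Ad x) ∘SL ad) v)
      (((ContinuousLinearMap.compL ℝ E E E).flip (Ad x) ∘SL ad ∘SL Ad x) v) := this
    simpa [hcompL] using h'
  intro u v w
  -- Step 3: differentiate step2 in x at one
  have h1 := HasMFDerivAt.comp (I' := 𝓘(ℝ, E →L[ℝ] E)) one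
    ((compL.flip (ad v)).hasMFDerivAt (x := Ad one)) hAd'
  -- the map G : End E → End E, G T = (ad (T v)).comp T
  set L : (E →L[ℝ] E) →L[ℝ] (E →L[ℝ] E) :=
    ad.comp (ContinuousLinearMap.apply ℝ E v) with hL
  have hGf : HasFDerivAt (fun T : E →L[ℝ] E => (L T).comp T)
      ((compL (L (Ad one))).comp (ContinuousLinearMap.id ℝ (E →L[ℝ] E))
        + (compL.flip (Ad one)).comp L) (Ad one) :=
    (L.hasFDerivAt).clm_comp (hasFDerivAt_id (Ad one))
  have hGm := hasMFDerivAt_iff_hasFDerivAt.mpr hGf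
  have h2 := HasMFDerivAt.comp (I' := 𝓘(ℝ, E →L[ℝ] E)) one hGm hAd'
  simp only [Function.comp_def] at h1 h2
  have hfun : (fun x => compL.flip (ad v) (Ad x)) = fun x => (L (Ad x)).comp (Ad x) := by
    funext x
    simp only [hL, hcompL, ContinuousLinearMap.compL_apply, ContinuousLinearMap.flip_apply,
      ContinuousLinearMap.comp_apply, ContinuousLinearMap.apply_apply]
    exact step2 x v
  rw [hfun] at h1
  have key : ((compL.flip (ad v)).comp ad : E →L[ℝ] (E →L[ℝ] E)) =
      (((compL (L (Ad one))).comp (ContinuousLinearMap.id ℝ (E →L[ℝ] E))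
        + (compL.flip (Ad one)).comp L).comp ad : E →L[ℝ] (E →L[ℝ] E)) :=
    h1.mfderiv.symm.trans h2.mfderiv
  have key2 := DFunLike.congr_fun (DFunLike.congr_fun key u) w
  simp only [hcompL, hL, hAd_one, ContinuousLinearMap.comp_apply,
    ContinuousLinearMap.add_apply, ContinuousLinearMap.flip_apply,
    ContinuousLinearMap.compL_apply, ContinuousLinearMap.apply_apply,
    ContinuousLinearMap.coe_id', id_eq, ContinuousLinearMap.id_apply] at key2
  rw [key2, add_comm]
end

section
/- Let E be a finite-dimensional real vector space and X a smooth manifold modeled on E, equipped with a smooth map ▷ : X × X → X such that (X,▷) is a rack (each map y ↦ x ▷ y is a diffeomorphism of X and x ▷ (y ▷ z) = (x ▷ y) ▷ (x ▷ z) for all x,y,z), pointed at an element 1 ∈ X (1 ▷ x = x and x ▷ 1 = 1 for all x). For x ∈ X let Ad(x) : E → E be the differential at the point 1 of the smooth map y ↦ x ▷ y (well defined as an endomorphism of E since x ▷ 1 = 1, identifying the tangent space T₁X with E). Then for all x, y ∈ X one has Ad(x ▷ y) ∘ Ad(x) = Ad(x) ∘ Ad(y); in particular each Ad(x) is invertible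 and Ad is a rack morphism from X to the conjugation rack of GL(E). -/
open scoped Manifold

/-- Let `E` be a finite-dimensional real vector space and `X` a smooth
manifold modeled on `E`, with a smooth pointed rack structure `(▷, 1)` in which every left
translation `x ▷ –` is a diffeomorphism, and let `Ad x : E → E` be the differential at `1`
of `y ↦ x ▷ y` (identifying `T₁X` with `E`; well defined since `x ▷ 1 = 1`). Then
`Ad (x ▷ y) ∘ Ad x = Ad x ∘ Ad y` for all `x, y`; in particular each `Ad x` is invertible
and `Ad` is a rack morphism from `X` to the conjugation rack of `GL(E)`. -/
theorem lie_rack_Ad_is_rack_morphism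
    {E : Type*} [NormedAddCommGroup E] [NormedSpace ℝ E] [FiniteDimensional ℝ E]
    {X : Type*} [TopologicalSpace X] [ChartedSpace E X]
    [IsManifold 𝓘(ℝ, E) (⊤ : ℕ∞) X]
    (op : X → X → X) (one : X)
    (hsmooth : ContMDiff (𝓘(ℝ, E).prod 𝓘(ℝ, E)) 𝓘(ℝ, E) (⊤ : ℕ∞) (fun p : X × X => op p.1 p.2))
    (hdiffeo : ∀ x : X, ∃ φ : Diffeomorph 𝓘(ℝ, E) 𝓘(ℝ, E) X X (⊤ : ℕ∞), ∀ y : X, φ y = op x y)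
    (hdistrib : ∀ x y z : X, op x (op y z) = op (op x y) (op x z))
    (hone_l : ∀ x : X, op one x = x) (hone_r : ∀ x : X, op x one = one)
    (Ad : X → E →L[ℝ] E)
    (hAd : ∀ x : X, Ad x = mfderiv 𝓘(ℝ, E) 𝓘(ℝ, E) (op x) one) :
    (∀ x y : X, (Ad (op x y)).comp (Ad x) = (Ad x).comp (Ad y)) ∧
    (∀ x : X, Function.Bijective (Ad x)) := by
  -- each left translation is smooth, hence mdifferentiable everywhere
  have hsm : ∀ x : X, ContMDiff 𝓘(ℝ, E) 𝓘(ℝ, E) (⊤ : ℕ∞) (op x) := by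
    intro x
    have : ContMDiff 𝓘(ℝ, E) 𝓘(ℝ, E) (⊤ : ℕ∞) (fun y : X => op (x, y).1 (x, y).2) :=
      hsmooth.comp (contMDiff_const.prodMk contMDiff_id)
    simpa using this
  have hmd : ∀ (x z : X), MDifferentiableAt 𝓘(ℝ, E) 𝓘(ℝ, E) (op x) z := fun x z =>
    ((hsm x).mdifferentiable (by simp)) z
  constructor
  · intro x y
    have hfun : (op x) ∘ (op y) = (op (op x y)) ∘ (op x) := by
      funext z; simp [Function.comp, hdistrib x y z]
    have h1 : mfderiv 𝓘(ℝ, E) 𝓘(ℝ, E) ((op x) ∘ (op y)) one =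
        (mfderiv 𝓘(ℝ, E) 𝓘(ℝ, E) (op x) (op y one)).comp
          (mfderiv 𝓘(ℝ, E) 𝓘(ℝ, E) (op y) one) :=
      mfderiv_comp one (hmd x _) (hmd y _)
    have h2 : mfderiv 𝓘(ℝ, E) 𝓘(ℝ, E) ((op (op x y)) ∘ (op x)) one =
        (mfderiv 𝓘(ℝ, E) 𝓘(ℝ, E) (op (op x y)) (op x one)).comp
          (mfderiv 𝓘(ℝ, E) 𝓘(ℝ, E) (op x) one) :=
      mfderiv_comp one (hmd _ _) (hmd x _)
    rw [hfun] at h1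
    rw [hAd x, hAd y, hAd (op x y)]
    rw [hone_r y] at h1
    rw [hone_r x] at h2
    exact h2.symm.trans h1
  · intro x
    obtain ⟨φ, hφ⟩ := hdiffeo x
    have hφf : (φ : X → X) = op x := funext hφ
    have hφmd : ∀ z : X, MDifferentiableAt 𝓘(ℝ, E) 𝓘(ℝ, E) φ z := fun z =>
      φ.mdifferentiable (by simp) z
    have hφsmd : ∀ z : X, MDifferentiableAt 𝓘(ℝ, E) 𝓘(ℝ, E) φ.symm z := fun z =>
      φ.symm.mdifferentiable (by simp) z
    have hφone : φ one = one := by rw [hφ one, hone_r x]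
    have hAdeq : Ad x = mfderiv 𝓘(ℝ, E) 𝓘(ℝ, E) φ one := by
      rw [hAd x, hφf]
    set A := mfderiv 𝓘(ℝ, E) 𝓘(ℝ, E) (φ : X → X) one with hA
    set B := mfderiv 𝓘(ℝ, E) 𝓘(ℝ, E) (φ.symm : X → X) one with hB
    have hleft : (B.comp A : E →L[ℝ] E) = ContinuousLinearMap.id ℝ E := by
      have hcomp : mfderiv 𝓘(ℝ, E) 𝓘(ℝ, E) ((φ.symm : X → X) ∘ (φ : X → X)) one =
          (mfderiv 𝓘(ℝ, E) 𝓘(ℝ, E) (φ.symm : X → X) (φ one)).comp A :=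
        mfderiv_comp one (hφsmd _) (hφmd _)
      have hid : (φ.symm : X → X) ∘ (φ : X → X) = id := by
        funext z; simp
      rw [hid, hφone] at hcomp
      rw [mfderiv_id] at hcomp
      exact hcomp.symm
    have hright : (A.comp B : E →L[ℝ] E) = ContinuousLinearMap.id ℝ E := by
      have hcomp : mfderiv 𝓘(ℝ, E) 𝓘(ℝ, E) ((φ : X → X) ∘ (φ.symm : X → X)) one =
          (mfderiv 𝓘(ℝ, E) 𝓘(ℝ, E) (φ : X → X) (φ.symm one)).comp B :=
        mfderiv_comp one (hφmd _) (hφsmd _)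
      have hsymone : φ.symm one = one :=
        φ.toEquiv.symm_apply_eq.mpr hφone.symm
      have hid : (φ : X → X) ∘ (φ.symm : X → X) = id := by
        funext z; simp
      rw [hid, hsymone] at hcomp
      rw [mfderiv_id] at hcomp
      exact hcomp.symm
    rw [hAdeq]
    have hli : Function.LeftInverse B A := fun a => by
      have := congrArg (fun L : E →L[ℝ] E => L a) hleft
      exact this
    have hri : Function.RightInverse B A := fun a => by
      have := congrArg (fun L : E →L[ℝ] E => L a) hright
      exact this
    exact ⟨hli.injective, hri.surjective⟩
end

section
/- Let G be a group and A an abelian group on which G acts by automorphisms. If F : G → A satisfies the group 1-cocycle identity F(gh) = F(g) + g·F(h) for all g,h ∈ G, then F satisfies the rack 1-cocycle identity for the conjugation rack of G with symmetric coefficients: g·F(h) − F(ghg⁻¹) − (ghg⁻¹)·F(g) + F(g) = 0 for all g,h ∈ G. -/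
/-- Let `G` be a group and `A` an abelian group on which `G` acts by
automorphisms. If `F : G → A` satisfies the group 1-cocycle identity
`F (g * h) = F g + g • F h`, then `F` satisfies the rack 1-cocycle identity for the
conjugation rack of `G` with symmetric coefficients:
`g • F h - F (g * h * g⁻¹) - (g * h * g⁻¹) • F g + F g = 0`. -/
theorem group_one_cocycle_is_rack_one_cocycle {G A : Type*} [Group G] [AddCommGroup A]
    [DistribMulAction G A] (F : G → A)
    (hF : ∀ g h : G, F (g * h) = F g + g • F h) :
    ∀ g h : G, g • F h - F (g * h * g⁻¹) - (g * h * g⁻¹) • F g + F g = 0 := by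
  intro g h
  have key : F (g * h) = F (g * h * g⁻¹ * g) := by group
  rw [hF, hF] at key
  linear_combination (norm := abel) key
end

section
/- Let G be a group, A an abelian group on which G acts by automorphisms, and f : G × G → A any map. Write g ▷ h = ghg⁻¹, define b f(g,h,k) := g·f(h,k) − f(gh,k) + f(g, h▷k) and define the rack coboundary (for the antisymmetric module structure) d_R f(g,h,k) := g·f(h,k) − f(g▷h, g▷k) − (g▷h)·f(g,k) + f(g, h▷k). Then for all g,h,k ∈ G one has d_R f(g,h,k) = b f(g,h,k) − b f(g▷h, g, k). In particular, if f satisfies the identity g·f(h,k) − f(gh,k) + f(g, h▷k) = 0 for all g,h,k ∈ G, then f satisfies the rack 2-cocycle identity d_R f = 0. -/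
/-- Let `G` be a group, `A` a `G`-module and `f : G × G → A` any map.
With `g ▷ h = g h g⁻¹`, `b f (g,h,k) = g • f h k - f (g h) k + f g (h ▷ k)` and the rack
coboundary (antisymmetric coefficients)
`d_R f (g,h,k) = g • f h k - f (g▷h) (g▷k) - (g▷h) • f g k + f g (h▷k)`, one has
`d_R f (g,h,k) = b f (g,h,k) - b f (g▷h, g, k)` for all `g,h,k`. In particular, if
`b f = 0` identically then `f` satisfies the rack 2-cocycle identity `d_R f = 0`. -/
theorem rack_coboundary_eq_b_difference {G A : Type*} [Group G] [AddCommGroup A]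
    [DistribMulAction G A] (f : G → G → A) :
    let conj : G → G → G := fun g h => g * h * g⁻¹
    let bf : G → G → G → A := fun g h k => g • f h k - f (g * h) k + f g (conj h k)
    let dR : G → G → G → A := fun g h k =>
      g • f h k - f (conj g h) (conj g k) - (conj g h) • f g k + f g (conj h k)
    (∀ g h k : G, dR g h k = bf g h k - bf (conj g h) g k) ∧
    ((∀ g h k : G, bf g h k = 0) → ∀ g h k : G, dR g h k = 0) := by
  intro conj bf dR
  constructor
  · intro g h k
    have h1 : conj g h * g = g * h := by simp [conj]
    simp only [dR, bf, conj, h1]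
    abel
  · intro hb g h k
    have h1 : conj g h * g = g * h := by simp [conj]
    simp only [dR]
    have e1 := hb g h k
    have e2 := hb (conj g h) g k
    simp only [bf, conj, h1] at e1 e2 ⊢
    rw [show g • f h k - f (g * h * g⁻¹) (g * k * g⁻¹) - (g * h * g⁻¹) • f g k + f g (h * k * h⁻¹) = (g • f h k - f (g * h) k + f g (h * k * h⁻¹)) - ((g * h * g⁻¹) • f g k - f (g * h) k + f (g * h * g⁻¹) (g * k * g⁻¹)) by abel, e1, e2, sub_zero]
end

section
/- Let G be a group, A an abelian group on which G acts by automorphisms, and f : G × G → A a map satisfying f(1,g) = f(g,1) = 0 for all g ∈ G and g·f(h,k) − f(gh,k) + f(g, hkh⁻¹) = 0 for all g,h,k ∈ G. Define on G × A the operation (g,a) ▷ (h,b) := (ghg⁻¹, g·b + f(g,h)) and the projection p : G × A → G, p(g,a) = g. Then (G × A, ▷) is a pointed rack with neutral element (1,0), p satisfies p(u ▷ v) = p(u) p(v) p(u)⁻¹ for all u,v ∈ G × A, and u ▷ v = p(u)·v for the G-action g·(h,b) = (ghg⁻¹, g·b + f(g,h)); that is, p : G × A → G is a pointed augmented rack.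 -/
/-- Let `G` be a group, `A` a `G`-module and `f : G × G → A` with
`f 1 g = f g 1 = 0` and `g • f h k - f (g h) k + f g (h k h⁻¹) = 0` for all `g,h,k`.
Define on `G × A` the operation `(g,a) ▷ (h,b) := (g h g⁻¹, g • b + f g h)`, the `G`-action
`g · (h,b) := (g h g⁻¹, g • b + f g h)` and the projection `p (g,a) = g`. Then `(G × A, ▷)`
is a pointed rack with neutral element `(1,0)`, the action is a genuine `G`-action,
`p` satisfies the augmentation identity `p (g · v) = g * p v * g⁻¹`, and `u ▷ v = p u · v`;
that is, `p : G × A → G` is a pointed augmented rack. -/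
theorem pointed_augmented_rack_from_cocycle {G A : Type*} [Group G] [AddCommGroup A]
    [DistribMulAction G A] (f : G → G → A)
    (hf_l : ∀ g : G, f 1 g = 0) (hf_r : ∀ g : G, f g 1 = 0)
    (hcoc : ∀ g h k : G, g • f h k - f (g * h) k + f g (h * k * h⁻¹) = 0) :
    let act : G → G × A → G × A := fun g u => (g * u.1 * g⁻¹, g • u.2 + f g u.1)
    let op : G × A → G × A → G × A := fun u v => act u.1 v
    let p : G × A → G := fun u => u.1
    (∀ u : G × A, act 1 u = u) ∧
    (∀ (g h : G) (u : G × A), act g (act h u) = act (g * h) u) ∧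
    (∀ (g : G) (v : G × A), p (act g v) = g * p v * g⁻¹) ∧
    (∀ u : G × A, Function.Bijective (op u)) ∧
    (∀ u v w : G × A, op u (op v w) = op (op u v) (op u w)) ∧
    (∀ u : G × A, op ((1 : G), (0 : A)) u = u) ∧
    (∀ u : G × A, op u ((1 : G), (0 : A)) = ((1 : G), (0 : A))) ∧
    (∀ u v : G × A, op u v = act (p u) v) := by
  intro act op p
  have hone : ∀ u : G × A, act 1 u = u := by
    intro u
    simp [act, hf_l]
  have hcomp : ∀ (g h : G) (u : G × A), act g (act h u) = act (g * h) u := by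
    intro g h u
    have hc := hcoc g h u.1
    have : g • f h u.1 + f g (h * u.1 * h⁻¹) = f (g * h) u.1 := by
      linear_combination (norm := abel) hc
    simp only [act, Prod.mk.injEq, smul_add, add_assoc, mul_smul]
    refine ⟨by group, ?_⟩
    rw [this]
  refine ⟨hone, hcomp, fun g v => rfl, ?_, ?_, ?_, ?_, fun u v => rfl⟩
  · intro u
    have hli : Function.LeftInverse (act u.1⁻¹) (op u) := by
      intro v; show act u.1⁻¹ (act u.1 v) = v
      rw [hcomp, inv_mul_cancel, hone]
    have hri : Function.RightInverse (act u.1⁻¹) (op u) := by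
      intro v; show act u.1 (act u.1⁻¹ v) = v
      rw [hcomp, mul_inv_cancel, hone]
    exact ⟨hli.injective, hri.surjective⟩
  · intro u v w
    show act u.1 (act v.1 w) = act (u.1 * v.1 * u.1⁻¹) (act u.1 w)
    rw [hcomp, hcomp]
    congr 1
    group
  · intro u; exact hone u
  · intro u
    show act u.1 (1, 0) = _
    simp [act, hf_r]
end

section
/- For x = (x₁,x₂) ∈ ℝ² and y = (y₃,y₄,y₅) ∈ ℝ³ define ρ_x(y) = (0, x₁y₃, x₁y₄ + x₂y₃), and for x,y ∈ ℝ² define ω(x,y) = (x₁(y₁+y₂), x₂(y₁+y₂), 0) ∈ ℝ³. Then there exists no linear map α : ℝ² → ℝ³ such that ρ_x(α(y)) = ω(x,y) for all x,y ∈ ℝ²; that is, the Leibniz 2-cocycle ω on the abelian Lie algebra ℝ² with values in the antisymmetric representation ℝ³ is not a Leibniz coboundary, so the corresponding abelian extension (the 5-dimensional Leibniz algebra with bracket [(x₁,…,x₅),(y₁,…,y₅)] = (0, 0, x₁(y₁+y₂), x₂(y₁+y₂)+x₁y₃, x₁y₄+x₂y₃)) is non-split. -/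
/-- For the abelian Lie algebra `𝔤₀ = ℝ²` acting on `𝔞 = ℝ³` by
`ρ x (y₃,y₄,y₅) = (0, x₁y₃, x₁y₄ + x₂y₃)`, the Leibniz 2-cocycle
`ω x y = (x₁(y₁+y₂), x₂(y₁+y₂), 0)` with values in the antisymmetric representation `ℝ³`
is not a Leibniz coboundary: there is no linear `α : ℝ² → ℝ³` with `ρ x (α y) = ω x y`
for all `x, y` (since `ℝ²` is abelian the bracket term vanishes). Hence the corresponding
abelian extension — the 5-dimensional Leibniz algebra of the paper's example — is non-split. -/
theorem leibnizR5_cocycle_not_coboundary :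
    ¬ ∃ α : (ℝ × ℝ) →ₗ[ℝ] (ℝ × ℝ × ℝ),
      ∀ x y : ℝ × ℝ,
        (((0 : ℝ), x.1 * (α y).1, x.1 * (α y).2.1 + x.2 * (α y).1) : ℝ × ℝ × ℝ)
          = (x.1 * (y.1 + y.2), x.2 * (y.1 + y.2), (0 : ℝ)) := by
  rintro ⟨α, h⟩
  have := congrArg Prod.fst (h (1, 0) (1, 0))
  simp at this
end

section
/- Define f : ℝ² × ℝ² → ℝ³ by f(a,b) = ( a₁(b₁+b₂), (½ b₁ a₁ + a₂ + ½ a₁²)(b₁+b₂), (a₁a₂ + ⅙ a₁³ + ¼ b₁ a₁² + ½ b₂ a₁ + ½ b₁ a₂ + ⅙ b₁² a₁)(b₁+b₂) ), and for a ∈ ℝ² define φ_a ∈ GL(ℝ³) by φ_a(v₁,v₂,v₃) = (v₁, a₁v₁ + v₂, (a₂ + ½ a₁²)v₁ + a₁v₂ + v₃). Then f(a,0) = f(0,b) = 0 for all a,b ∈ ℝ², and φ_a(f(b,c)) − f(a+b, c) + f(a,c) = 0 for all a,b,c ∈ ℝ². -/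
/-- The integrated rack 2-cocycle `f : ℝ² × ℝ² → ℝ³` of the paper's example. -/
noncomputable def rackCocycleF (a b : ℝ × ℝ) : ℝ × ℝ × ℝ :=
  (a.1 * (b.1 + b.2),
   (b.1 * a.1 / 2 + a.2 + a.1 ^ 2 / 2) * (b.1 + b.2),
   (a.1 * a.2 + a.1 ^ 3 / 6 + b.1 * a.1 ^ 2 / 4 + b.2 * a.1 / 2 + b.1 * a.2 / 2
      + b.1 ^ 2 * a.1 / 6) * (b.1 + b.2))

/-- The automorphism `φ_a ∈ GL(ℝ³)`, `φ_a(v₁,v₂,v₃) = (v₁, a₁v₁+v₂, (a₂+½a₁²)v₁+a₁v₂+v₃)`. -/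
noncomputable def phiAut (a : ℝ × ℝ) (v : ℝ × ℝ × ℝ) : ℝ × ℝ × ℝ :=
  (v.1, a.1 * v.1 + v.2.1, (a.2 + a.1 ^ 2 / 2) * v.1 + a.1 * v.2.1 + v.2.2)

/-- Each `φ_a` is invertible (lies in `GL(ℝ³)`), `f(a,0) = f(0,b) = 0`,
and `φ_a (f(b,c)) − f(a+b, c) + f(a,c) = 0` for all `a,b,c ∈ ℝ²` (the identity
`g·f(h,k) − f(gh,k) + f(g, h▷k) = 0` for the integrated rack 2-cocycle, the group `ℝ²`
being abelian so that `h ▷ k = k`). -/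
theorem rackCocycleF_identities :
    (∀ a : ℝ × ℝ, Function.Bijective (phiAut a)) ∧
    (∀ a b : ℝ × ℝ, rackCocycleF a 0 = 0 ∧ rackCocycleF 0 b = 0) ∧
    (∀ a b c : ℝ × ℝ, phiAut a (rackCocycleF b c) - rackCocycleF (a + b) c + rackCocycleF a c = 0) := by
  refine ⟨fun a => ?_, fun a b => ?_, fun a b c => ?_⟩
  · refine Function.bijective_iff_has_inverse.2
      ⟨fun v => (v.1, -a.1 * v.1 + v.2.1,
        (a.1 ^ 2 / 2 - a.2) * v.1 - a.1 * v.2.1 + v.2.2), fun v => ?_, fun v => ?_⟩ <;>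
    · simp only [phiAut]
      refine Prod.ext ?_ (Prod.ext ?_ ?_) <;> dsimp <;> ring
  · constructor <;>
    · simp only [rackCocycleF, Prod.fst_zero, Prod.snd_zero]
      refine Prod.ext ?_ (Prod.ext ?_ ?_) <;> dsimp <;> ring
  · simp only [phiAut, rackCocycleF, Prod.fst_add, Prod.snd_add, Prod.mk_sub_mk,
      Prod.mk_add_mk]
    refine Prod.ext ?_ (Prod.ext ?_ ?_) <;> dsimp <;> ring
end
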